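/- Assume v2(m) ≤ v2(k) and set t = (p^k+1)/2. Then the cyclic codes C_1 and C_t have the same weight distribution: for every natural number w, the number of pairs (a,b) ∈ F_{p^m}^2 with wt(c_1(a,b)) = w equals the number of pairs (a,b) ∈ F_{p^m}^2 with wt(c_t(a,b)) = w. -/

import Mathlib

/-!
Write `n = p^m - 1 = 2h`. The hypothesis on 2-adic valuations gives
`gcd(p^k + 1, p^m - 1) ∣ 2`, i.e. `gcd(2t, n) ∣ 2`. If `t` is odd it is coprime to `n`, so
`i ↦ t i mod n` permutes the coordinates and carries `c_1(a,b)` to `c_t(a,b)`; oddness of `t`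
keeps the sign `(-1)^i` intact. If `t` is even then `h` is odd, `s = t + h` is odd and coprime to
`n`, and `π^s = -π^t` since `π^h = -1`; replacing `π^t` by `-π^t` only swaps `a` and `b`.
-/

open Finset

theorem Nat.gcd_two_mul_dvd_of_padicValNat_le {k m : ℕ} (hm : m ≠ 0)
    (hv : padicValNat 2 m ≤ padicValNat 2 k) : Nat.gcd (2 * k) m ∣ k := by
  obtain ⟨e, o, ho, hg⟩ := Nat.exists_eq_two_pow_mul_odd (Nat.gcd_ne_zero_right (m := 2 * k) hm)
  have h2e : 2 ^ e ∣ k := by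
    have hem : 2 ^ e ∣ m := (Dvd.intro o hg.symm).trans (Nat.gcd_dvd_right _ _)
    exact (pow_dvd_pow 2 (((padicValNat_dvd_iff_le hm).mp hem).trans hv)).trans
      pow_padicValNat_dvd
  have hok : o ∣ k := by
    have ho2k : o ∣ 2 * k := (Dvd.intro_left _ hg.symm).trans (Nat.gcd_dvd_left _ _)
    exact ho.coprime_two_right.dvd_of_dvd_mul_left ho2k
  rw [hg]
  exact (ho.coprime_two_left.pow_left e).mul_dvd_of_dvd_of_dvd h2e hok

theorem Nat.gcd_pow_add_one_pow_sub_one_dvd_two {p k m : ℕ} (hp : 0 < p) (hm : m ≠ 0)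
    (hv : padicValNat 2 m ≤ padicValNat 2 k) : Nat.gcd (p ^ k + 1) (p ^ m - 1) ∣ 2 := by
  set d := Nat.gcd (p ^ k + 1) (p ^ m - 1)
  have hd2k : d ∣ p ^ (2 * k) - 1 := by
    rw [mul_comm, pow_mul, ← one_pow 2, Nat.sq_sub_sq]
    exact (Nat.gcd_dvd_left _ _).mul_right _
  have hdk : d ∣ p ^ k - 1 := by
    obtain ⟨c, hc⟩ := Nat.gcd_two_mul_dvd_of_padicValNat_le hm hv
    have hdg : d ∣ p ^ Nat.gcd (2 * k) m - 1 := by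
      rw [← Nat.pow_sub_one_gcd_pow_sub_one]
      exact Nat.dvd_gcd hd2k (Nat.gcd_dvd_right _ _)
    refine hdg.trans ?_
    conv_rhs => rw [hc, pow_mul, ← one_pow c]
    simpa using Nat.sub_dvd_pow_sub_pow (p ^ Nat.gcd (2 * k) m) 1 c
  have h1 : 1 ≤ p ^ k := Nat.one_le_pow _ _ hp
  have := Nat.dvd_sub (Nat.gcd_dvd_left _ _) hdk
  rwa [show p ^ k + 1 - (p ^ k - 1) = 2 by omega] at this

theorem Nat.coprime_of_two_mul_modEq {s t n : ℕ} (hs : Odd s) (hst : 2 * s ≡ 2 * t [MOD n])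
    (hd : Nat.gcd (2 * t) n ∣ 2) : s.Coprime n := by
  have h2t : Nat.gcd s n ∣ 2 * t :=
    (hst.dvd_iff (Nat.gcd_dvd_right _ _)).mp ((Nat.gcd_dvd_left _ _).mul_left 2)
  have h2 : Nat.gcd s n ∣ Nat.gcd s 2 :=
    Nat.dvd_gcd (Nat.gcd_dvd_left _ _) ((Nat.dvd_gcd h2t (Nat.gcd_dvd_right _ _)).trans hd)
  rwa [hs.coprime_two_right, Nat.dvd_one] at h2

theorem Nat.odd_of_even_of_gcd_two_mul_dvd_two {t h : ℕ} (ht : Even t)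
    (hd : Nat.gcd (2 * t) (h + h) ∣ 2) : Odd h := by
  by_contra h_even
  obtain ⟨r, rfl⟩ := Nat.not_odd_iff_even.mp h_even
  obtain ⟨q, rfl⟩ := ht
  have h4 : 4 ∣ Nat.gcd (2 * (q + q)) (r + r + (r + r)) :=
    Nat.dvd_gcd ⟨q, by ring⟩ ⟨r, by ring⟩
  have := Nat.le_of_dvd two_pos (h4.trans hd)
  omega

theorem Fin.card_filter_mul_of_coprime {n s : ℕ} (hs : s.Coprime n) (P : ℕ → Prop)
    [DecidablePred P] (hP : Function.Periodic P n) :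
    #{i : Fin n | P (s * i)} = #{i : Fin n | P i} := by
  let σ : Fin n → Fin n := fun i => ⟨s * i % n, Nat.mod_lt _ i.pos⟩
  have hσ : Function.Injective σ := fun i j hij =>
    Fin.ext ((Nat.ModEq.cancel_left_of_coprime (Nat.coprime_comm.mp hs)
      (congrArg Fin.val hij)).eq_of_lt_of_lt i.isLt j.isLt)
  refine Finset.card_equiv (Equiv.ofBijective σ (Finite.injective_iff_bijective.mp hσ)) ?_
  simp [σ, hP.map_mod_nat]

theorem pow_eq_neg_one_of_orderOf_eq_add_self {R : Type*} [CommRing R] [IsDomain R] {ζ : R}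
    {h : ℕ} (hζ : orderOf ζ = h + h) (h0 : h ≠ 0) : ζ ^ h = -1 := by
  have := (IsPrimitiveRoot.iff_orderOf.mpr hζ).pow_of_dvd h0 (Dvd.intro_left 2 (two_mul h))
  rw [← two_mul, Nat.mul_div_cancel _ (Nat.pos_of_ne_zero h0)] at this
  exact this.eq_neg_one_of_two_right

section CodewordWeight

variable {F K : Type*} [CommRing F] [Zero K] [DecidableEq K] (T : F → K) (n : ℕ)

/-- For `x = π ^ t` this is `wt (c_t (a, b))`, with `T` in place of the trace. -/
def codewordWeight (x a b : F) : ℕ :=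
  #{i : Fin n | T (a * x ^ (i : ℕ) + b * (-x) ^ (i : ℕ)) ≠ 0}

def weightDistribution [Fintype F] (x : F) (w : ℕ) : ℕ :=
  #{ab : F × F | codewordWeight T n x ab.1 ab.2 = w}

variable {T n}

theorem codewordWeight_neg (x a b : F) :
    codewordWeight T n (-x) a b = codewordWeight T n x b a := by
  simp only [codewordWeight, neg_neg, add_comm]

theorem codewordWeight_pow_of_coprime {x : F} (hx : x ^ n = 1) (hn : Even n) {s : ℕ}
    (hs : s.Coprime n) (a b : F) : codewordWeight T n (x ^ s) a b = codewordWeight T n x a b := by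
  have hodd : Odd s := (Nat.Coprime.coprime_dvd_right hn.two_dvd hs).odd_of_right
  have hP : Function.Periodic (fun j => T (a * x ^ j + b * (-x) ^ j) ≠ 0) n := by
    intro j
    simp only [pow_add, hx, hn.neg_pow, mul_one]
  simpa only [codewordWeight, ← hodd.neg_pow, ← pow_mul] using
    Fin.card_filter_mul_of_coprime hs _ hP

variable [Fintype F]

theorem weightDistribution_neg (x : F) :
    weightDistribution T n (-x) = weightDistribution T n x := by
  funext w
  refine Finset.card_equiv (Equiv.prodComm F F) ?_
  simp [codewordWeight_neg]

theorem weightDistribution_pow_of_coprime {x : F} (hx : x ^ n = 1) (hn : Even n) {s : ℕ}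
    (hs : s.Coprime n) : weightDistribution T n (x ^ s) = weightDistribution T n x := by
  funext w
  simp only [weightDistribution, codewordWeight_pow_of_coprime hx hn hs]

end CodewordWeight

theorem C1_Ct_same_weight_distribution_general (p m k : ℕ) (hodd : Odd p)
    (hm : 0 < m)
    (F : Type) [Field F] [Fintype F] [Algebra (ZMod p) F]
    (π : F) (hπ : orderOf π = p ^ m - 1)
    (hv : padicValNat 2 m ≤ padicValNat 2 k)
    (t : ℕ) (ht : t = (p ^ k + 1) / 2) :
    ∀ w : ℕ,
      (Finset.univ.filter (fun ab : F × F =>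
        (Finset.univ.filter (fun i : Fin (p ^ m - 1) =>
          Algebra.trace (ZMod p) F
            (ab.1 * π ^ (1 * (i : ℕ)) + ab.2 * (-(π ^ 1)) ^ (i : ℕ)) ≠ 0)).card = w)).card
      =
      (Finset.univ.filter (fun ab : F × F =>
        (Finset.univ.filter (fun i : Fin (p ^ m - 1) =>
          Algebra.trace (ZMod p) F
            (ab.1 * π ^ (t * (i : ℕ)) + ab.2 * (-(π ^ t)) ^ (i : ℕ)) ≠ 0)).card = w)).card := by
  intro w
  simp only [one_mul, pow_one, pow_mul]
  change weightDistribution (Algebra.trace (ZMod p) F) _ π w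
    = weightDistribution (Algebra.trace (ZMod p) F) _ (π ^ t) w
  obtain ⟨h, hh⟩ : Even (p ^ m - 1) := Nat.Odd.sub_odd hodd.pow odd_one
  have hπn : π ^ (p ^ m - 1) = 1 := hπ ▸ pow_orderOf_eq_one π
  have hd : Nat.gcd (2 * t) (p ^ m - 1) ∣ 2 := by
    rw [ht, Nat.two_mul_div_two_of_even (hodd.pow.add_one)]
    exact Nat.gcd_pow_add_one_pow_sub_one_dvd_two hodd.pos hm.ne' hv
  rcases Nat.even_or_odd t with ht_even | ht_odd
  · have h_odd : Odd h := Nat.odd_of_even_of_gcd_two_mul_dvd_two ht_even (hh ▸ hd)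
    have hs : (t + h).Coprime (p ^ m - 1) := by
      refine Nat.coprime_of_two_mul_modEq (ht_even.add_odd h_odd) ?_ hd
      rw [mul_add, two_mul h, ← hh]
      exact Nat.add_mod_right _ _
    have hπs : π ^ (t + h) = -π ^ t := by
      rw [pow_add, pow_eq_neg_one_of_orderOf_eq_add_self (hπ.trans hh) h_odd.pos.ne', mul_neg_one]
    rw [← weightDistribution_neg (π ^ t), ← hπs,
      weightDistribution_pow_of_coprime hπn ⟨h, hh⟩ hs]
  · rw [weightDistribution_pow_of_coprime hπn ⟨h, hh⟩
      (Nat.coprime_of_two_mul_modEq ht_odd rfl hd)]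

theorem C1_Ct_same_weight_distribution (p m k : ℕ) [Fact p.Prime] (hodd : Odd p)
    (hm : 0 < m) (hk : 0 < k)
    (F : Type) [Field F] [Fintype F] [Algebra (ZMod p) F]
    (hcard : Fintype.card F = p ^ m)
    (π : F) (hπ : orderOf π = p ^ m - 1)
    (hv : padicValNat 2 m ≤ padicValNat 2 k)
    (t : ℕ) (ht : t = (p ^ k + 1) / 2) :
    ∀ w : ℕ,
      (Finset.univ.filter (fun ab : F × F =>
        (Finset.univ.filter (fun i : Fin (p ^ m - 1) =>
          Algebra.trace (ZMod p) F
            (ab.1 * π ^ (1 * (i : ℕ)) + ab.2 * (-(π ^ 1)) ^ (i : ℕ)) ≠ 0)).card = w)).card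
      =
      (Finset.univ.filter (fun ab : F × F =>
        (Finset.univ.filter (fun i : Fin (p ^ m - 1) =>
          Algebra.trace (ZMod p) F
            (ab.1 * π ^ (t * (i : ℕ)) + ab.2 * (-(π ^ t)) ^ (i : ℕ)) ≠ 0)).card = w)).card :=
  C1_Ct_same_weight_distribution_general p m k hodd hm F π hπ hv t ht
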